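/- For ADAPD iterates with initialization consistency, for all k ≥ 0: (1/(2η))(‖√(I−W)X0^{k+1}‖_F² + ‖√(I−W)(X0^{k+1}−X0^k)‖_F² − ‖√(I−W)X0^k‖_F²) + (1/(2η))(‖V0^k‖_W² + ‖X0^{k+1}−X0^k‖_W² − ‖X0^k−X0^{k-1}‖_W²) ≤ (L − 1/(2η))‖X0^{k+1}−X0^k‖_F² + (L/2)‖X^{k+1}−X^k‖_F² + (1/(2η))‖X0^k−X0^{k-1}‖_F² − (1/(2η))‖V0^k‖_F² + (2/L)ε_k. -/

import Mathlib

open Matrix Finset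

attribute [local instance] Matrix.frobeniusNormedAddCommGroup Matrix.frobeniusNormedSpace

noncomputable section

variable {N p : ℕ}

/-- Frobenius inner product on `N × p` real matrices. -/
def frobInner (A B : Matrix (Fin N) (Fin p) ℝ) : ℝ := ∑ i, ∑ j, A i j * B i j

/-- Squared Frobenius norm. -/
def frobSq (A : Matrix (Fin N) (Fin p) ℝ) : ℝ := frobInner A A

/-- Frobenius norm. -/
def frobNorm (A : Matrix (Fin N) (Fin p) ℝ) : ℝ := Real.sqrt (frobInner A A)

/-- The continuous linear functional `H ↦ ⟨G, H⟩_F`. -/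
def frobCLM (G : Matrix (Fin N) (Fin p) ℝ) : Matrix (Fin N) (Fin p) ℝ →L[ℝ] ℝ :=
  LinearMap.toContinuousLinearMap
    { toFun := fun H => frobInner G H
      map_add' := by
        intro x y
        simp [frobInner, Matrix.add_apply, mul_add, Finset.sum_add_distrib]
      map_smul' := by
        intro c x
        simp [frobInner, Matrix.smul_apply, Finset.mul_sum]
        ring_nf
        apply Finset.sum_congr rfl; intro i _
        apply Finset.sum_congr rfl; intro j _; ring }

/-- Spectral norm (operator 2-norm) of a square real matrix. -/
def specNorm {N : ℕ} (M : Matrix (Fin N) (Fin N) ℝ) : ℝ :=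
  ‖Matrix.toEuclideanCLM (𝕜 := ℝ) M‖

/-- The all-ones `N × N` matrix. -/
def onesMat (N : ℕ) : Matrix (Fin N) (Fin N) ℝ := fun _ _ => 1

/-- Quadratic form `‖A‖_M² := ⟨A, M A⟩_F` for a symmetric `M` (possibly negative). -/
def quadForm (M : Matrix (Fin N) (Fin N) ℝ) (A : Matrix (Fin N) (Fin p) ℝ) : ℝ :=
  frobInner A (M * A)

/-- Augmented Lagrangian `L_η(X, X0; Y, Z)`, where `S` plays the role of `√(I−W)`. -/
def Lag (F : Matrix (Fin N) (Fin p) ℝ → ℝ) (S : Matrix (Fin N) (Fin N) ℝ) (η : ℝ)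
    (X X0 Y Z : Matrix (Fin N) (Fin p) ℝ) : ℝ :=
  F X + frobInner Y (X - X0) + (2*η)⁻¹ * frobSq (X - X0)
    + frobInner Z (S * X0) + (2*η)⁻¹ * frobSq (S * X0)

/-!
Write `D = X0^{k+1} − X0^k`, `D' = X0^k − X0^{k−1}`, `V = D − D'`. The updates give
`η Y^k − η √(I−W) Z^k = W D'` for every `k`, hence
`η (Y^{k+1} − Y^k) = (I−W) X0^{k+1} + W V`. With the residuals `R^k = ∇F(X^k) + Y^k + D'/η`
this reads `η (R^{k+1} − R^k − (∇F(X^{k+1}) − ∇F(X^k))) = (I−W) X0^{k+1} + W V + V`.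
Pairing with `D` and polarizing each term, `2⟨A, M (A − B)⟩ = ‖A‖_M² + ‖A − B‖_M² − ‖B‖_M²`,
produces the left-hand side exactly; the remaining pairing is bounded by Young's inequality,
the Lipschitz gradient and `‖R^{k+1} − R^k‖_F² ≤ 4 ε_k`.
-/

lemma frobInner_comm (A B : Matrix (Fin N) (Fin p) ℝ) : frobInner A B = frobInner B A := by
  simp [frobInner, mul_comm]

lemma frobInner_add_right (A B C : Matrix (Fin N) (Fin p) ℝ) :
    frobInner A (B + C) = frobInner A B + frobInner A C := by
  simp [frobInner, mul_add, Finset.sum_add_distrib]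

lemma frobInner_sub_right (A B C : Matrix (Fin N) (Fin p) ℝ) :
    frobInner A (B - C) = frobInner A B - frobInner A C := by
  simp [frobInner, mul_sub, Finset.sum_sub_distrib]

lemma frobInner_smul_right (c : ℝ) (A B : Matrix (Fin N) (Fin p) ℝ) :
    frobInner A (c • B) = c * frobInner A B := by
  simp [frobInner, Finset.mul_sum, mul_left_comm]

lemma frobInner_sub_left (A B C : Matrix (Fin N) (Fin p) ℝ) :
    frobInner (A - B) C = frobInner A C - frobInner B C := by
  rw [frobInner_comm, frobInner_sub_right, frobInner_comm C, frobInner_comm C]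

lemma frobInner_mul_left (M : Matrix (Fin N) (Fin N) ℝ) (A B : Matrix (Fin N) (Fin p) ℝ) :
    frobInner (M * A) B = frobInner A (Mᵀ * B) := by
  simp only [frobInner, Matrix.mul_apply, Matrix.transpose_apply, Finset.sum_mul, Finset.mul_sum]
  conv_lhs => enter [2, i]; rw [Finset.sum_comm]
  rw [Finset.sum_comm]
  refine Finset.sum_congr rfl fun l _ => ?_
  rw [Finset.sum_comm]
  exact Finset.sum_congr rfl fun j _ => Finset.sum_congr rfl fun i _ => by ring

lemma frobInner_mul_left_of_symm {M : Matrix (Fin N) (Fin N) ℝ} (hM : Mᵀ = M)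
    (A B : Matrix (Fin N) (Fin p) ℝ) : frobInner (M * A) B = frobInner A (M * B) := by
  rw [frobInner_mul_left, hM]

lemma frobSq_nonneg (A : Matrix (Fin N) (Fin p) ℝ) : 0 ≤ frobSq A :=
  show 0 ≤ ∑ i, ∑ j, A i j * A i j from
    Finset.sum_nonneg fun _ _ => Finset.sum_nonneg fun _ _ => mul_self_nonneg _

lemma frobSq_sub (A B : Matrix (Fin N) (Fin p) ℝ) :
    frobSq (A - B) = frobSq A - 2 * frobInner A B + frobSq B := by
  simp only [frobSq, frobInner_sub_left, frobInner_sub_right, frobInner_comm B A]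
  ring

lemma frobSq_add (A B : Matrix (Fin N) (Fin p) ℝ) :
    frobSq (A + B) = frobSq A + 2 * frobInner A B + frobSq B := by
  rw [frobSq, frobInner_add_right, frobInner_comm, frobInner_add_right, frobInner_comm (A + B),
    frobInner_add_right, frobSq, frobSq, frobInner_comm B A]
  ring

lemma frobSq_sub_le (A B : Matrix (Fin N) (Fin p) ℝ) :
    frobSq (A - B) ≤ 2 * frobSq A + 2 * frobSq B := by
  linarith [frobSq_sub A B, frobSq_add A B, frobSq_nonneg (A + B)]

lemma two_mul_mul_abs_frobInner_le (c : ℝ) (A B : Matrix (Fin N) (Fin p) ℝ) :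
    2 * c * |frobInner A B| ≤ frobSq A + c ^ 2 * frobSq B := by
  have hsq : frobSq (c • B) = c ^ 2 * frobSq B := by
    simp only [frobSq, frobInner_smul_right, frobInner_comm (c • B)]
    ring
  have hplus := frobSq_nonneg (A + c • B)
  have hminus := frobSq_nonneg (A - c • B)
  rw [frobSq_add, frobInner_smul_right, hsq] at hplus
  rw [frobSq_sub, frobInner_smul_right, hsq] at hminus
  rcases abs_choice (frobInner A B) with h | h <;> rw [h] <;> linarith

lemma frobSq_le_of_frobNorm_le {c : ℝ} {A B : Matrix (Fin N) (Fin p) ℝ}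
    (h : frobNorm A ≤ c * frobNorm B) : frobSq A ≤ c ^ 2 * frobSq B := by
  have hA : frobNorm A ^ 2 = frobSq A := Real.sq_sqrt (frobSq_nonneg A)
  have hB : frobNorm B ^ 2 = frobSq B := Real.sq_sqrt (frobSq_nonneg B)
  rw [← hA, ← hB, ← mul_pow]
  exact pow_le_pow_left₀ (Real.sqrt_nonneg _) h 2

lemma frobInner_sub_sub_le {L e : ℝ} (hL : 0 < L) {R R' g x : Matrix (Fin N) (Fin p) ℝ}
    (hR' : frobSq R' ≤ e) (hR : frobSq R ≤ e) (hg : frobSq g ≤ L ^ 2 * frobSq x)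
    (D : Matrix (Fin N) (Fin p) ℝ) :
    frobInner (R' - R - g) D ≤ L * frobSq D + L / 2 * frobSq x + 2 / L * e := by
  have hscale : 2 * L * (L * frobSq D + L / 2 * frobSq x + 2 / L * e)
      = 2 * L ^ 2 * frobSq D + L ^ 2 * frobSq x + 4 * e := by
    field_simp
    ring
  rw [← mul_le_mul_iff_right₀ (by positivity : 0 < 2 * L), hscale, frobInner_sub_left]
  nlinarith [le_abs_self (frobInner (R' - R) D), neg_abs_le (frobInner g D),
    two_mul_mul_abs_frobInner_le L (R' - R) D, two_mul_mul_abs_frobInner_le L g D,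
    frobSq_sub_le R' R]

lemma two_mul_frobInner_eq_quadForm {M : Matrix (Fin N) (Fin N) ℝ} (hM : Mᵀ = M)
    (A B : Matrix (Fin N) (Fin p) ℝ) :
    2 * frobInner A (M * (A - B)) = quadForm M A + quadForm M (A - B) - quadForm M B := by
  have hBA : frobInner B (M * A) = frobInner A (M * B) := by
    rw [frobInner_comm, frobInner_mul_left_of_symm hM]
  simp only [quadForm, Matrix.mul_sub, frobInner_sub_left, frobInner_sub_right, hBA]
  ring

lemma frobSq_eq_quadForm_one (A : Matrix (Fin N) (Fin p) ℝ) : frobSq A = quadForm 1 A := by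
  rw [quadForm, Matrix.one_mul, frobSq]

lemma frobSq_mul_eq_quadForm {S : Matrix (Fin N) (Fin N) ℝ} (hS : Sᵀ = S)
    (A : Matrix (Fin N) (Fin p) ℝ) : frobSq (S * A) = quadForm (S * S) A := by
  rw [frobSq, frobInner_mul_left_of_symm hS, quadForm, Matrix.mul_assoc]

lemma adapd_energy_identity {W S : Matrix (Fin N) (Fin N) ℝ} {η : ℝ} (hη : η ≠ 0)
    (hW : Wᵀ = W) (hS : Sᵀ = S) (hSsq : S * S = 1 - W) {A B C E : Matrix (Fin N) (Fin p) ℝ}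
    (hE : η • E = (1 - W) * A + W * ((A - B) - (B - C)) + ((A - B) - (B - C))) :
    (2*η)⁻¹ * (frobSq (S * A) + frobSq (S * (A - B)) - frobSq (S * B))
      + (2*η)⁻¹ * (quadForm W ((A - B) - (B - C)) + quadForm W (A - B) - quadForm W (B - C))
    = frobInner E (A - B)
      - (2*η)⁻¹ * (frobSq (A - B) + frobSq ((A - B) - (B - C)) - frobSq (B - C)) := by
  have hSS : (S * S)ᵀ = S * S := by rw [Matrix.transpose_mul, hS]
  have hpair : frobInner E (A - B) = η⁻¹ * (frobInner A (S * S * (A - B))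
      + frobInner (A - B) (W * ((A - B) - (B - C))) + frobInner (A - B) ((A - B) - (B - C))) := by
    rw [eq_inv_mul_iff_mul_eq₀ hη, frobInner_comm, ← frobInner_smul_right, hE, ← hSsq,
      frobInner_add_right, frobInner_add_right, ← frobInner_mul_left_of_symm hSS, frobInner_comm]
  have hA := two_mul_frobInner_eq_quadForm hSS A B
  have hV := two_mul_frobInner_eq_quadForm hW (A - B) (B - C)
  have hI := two_mul_frobInner_eq_quadForm Matrix.transpose_one (A - B) (B - C)
  rw [Matrix.one_mul] at hI
  simp only [frobSq_mul_eq_quadForm hS, frobSq_eq_quadForm_one]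
  linear_combination -(2*η)⁻¹ * (hA + hV + hI) - hpair

/-- `R^k`; at `k = 0` the truncated `k - 1 = 0` makes it `∇F(X⁰) + Y⁰`, the `R⁰` of the
initialization. -/
def adapdResidual (G : Matrix (Fin N) (Fin p) ℝ → Matrix (Fin N) (Fin p) ℝ) (η : ℝ)
    (X X0 Y : ℕ → Matrix (Fin N) (Fin p) ℝ) (k : ℕ) : Matrix (Fin N) (Fin p) ℝ :=
  G (X k) + Y k + η⁻¹ • (X0 k - X0 (k - 1))

section Adapd

variable {W S : Matrix (Fin N) (Fin N) ℝ} {η : ℝ} {ε : ℕ → ℝ}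
  {G : Matrix (Fin N) (Fin p) ℝ → Matrix (Fin N) (Fin p) ℝ}
  {X X0 Y Z : ℕ → Matrix (Fin N) (Fin p) ℝ}

lemma adapdResidual_le
    (hres : ∀ k, frobSq (G (X (k+1)) + Y k + η⁻¹ • (X (k+1) - X0 k)) ≤ ε (k+1))
    (hYit : ∀ k, Y (k+1) = Y k + η⁻¹ • (X (k+1) - X0 (k+1)))
    (hY0R : ∃ R0 : Matrix (Fin N) (Fin p) ℝ, Y 0 = R0 - G (X 0) ∧ frobSq R0 ≤ ε 0) :
    ∀ k, frobSq (adapdResidual G η X X0 Y k) ≤ ε k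
  | 0 => by
    obtain ⟨R0, hY0, hR0⟩ := hY0R
    simpa [adapdResidual, hY0] using hR0
  | k + 1 => by
    convert hres k using 2
    rw [adapdResidual, Nat.add_sub_cancel, hYit k]
    module

lemma adapd_smul_mul_Z_succ (hη : η ≠ 0) (hSsq : S * S = 1 - W)
    (hZit : ∀ k, Z (k+1) = Z k + η⁻¹ • (S * X0 (k+1))) (k : ℕ) :
    η • (S * Z (k+1)) = η • (S * Z k) + (1 - W) * X0 (k+1) := by
  rw [hZit k, Matrix.mul_add, Matrix.mul_smul, ← Matrix.mul_assoc, hSsq, smul_add,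
    smul_inv_smul₀ hη]

lemma adapd_dual_gap (hη : η ≠ 0) (hSsq : S * S = 1 - W)
    (hX0it : ∀ k, X0 (k+1) = (2:ℝ)⁻¹ • (W * X0 k + X (k+1) + η • (Y k - S * Z k)))
    (hYit : ∀ k, Y (k+1) = Y k + η⁻¹ • (X (k+1) - X0 (k+1)))
    (hZit : ∀ k, Z (k+1) = Z k + η⁻¹ • (S * X0 (k+1)))
    (hZY0 : S * Z 0 = Y 0) :
    ∀ k, η • (Y k - S * Z k) = W * (X0 k - X0 (k - 1))
  | 0 => by simp [hZY0]
  | k + 1 => by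
    have hgap : η • (Y k - S * Z k) = (2:ℝ) • X0 (k+1) - W * X0 k - X (k+1) := by
      rw [hX0it k, smul_smul]
      module
    calc η • (Y (k+1) - S * Z (k+1))
        = η • (Y k - S * Z k) + (X (k+1) - X0 (k+1)) - (1 - W) * X0 (k+1) := by
          rw [smul_sub, adapd_smul_mul_Z_succ hη hSsq hZit, hYit k, smul_add,
            smul_inv_smul₀ hη]
          module
      _ = W * (X0 (k+1) - X0 k) := by
          rw [hgap, Matrix.sub_mul, Matrix.one_mul, Matrix.mul_sub]
          module

lemma adapd_residual_increment (hη : η ≠ 0) (hSsq : S * S = 1 - W)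
    (hX0it : ∀ k, X0 (k+1) = (2:ℝ)⁻¹ • (W * X0 k + X (k+1) + η • (Y k - S * Z k)))
    (hYit : ∀ k, Y (k+1) = Y k + η⁻¹ • (X (k+1) - X0 (k+1)))
    (hZit : ∀ k, Z (k+1) = Z k + η⁻¹ • (S * X0 (k+1)))
    (hZY0 : S * Z 0 = Y 0) (k : ℕ) :
    η • (adapdResidual G η X X0 Y (k+1) - adapdResidual G η X X0 Y k
        - (G (X (k+1)) - G (X k)))
      = (1 - W) * X0 (k+1) + W * ((X0 (k+1) - X0 k) - (X0 k - X0 (k - 1)))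
        + ((X0 (k+1) - X0 k) - (X0 k - X0 (k - 1))) := by
  have hgap := adapd_dual_gap hη hSsq hX0it hYit hZit hZY0
  have hgap_succ := hgap (k+1)
  rw [Nat.add_sub_cancel] at hgap_succ
  have hY : η • (Y (k+1) - Y k)
      = (1 - W) * X0 (k+1) + W * (X0 (k+1) - X0 k) - W * (X0 k - X0 (k - 1)) := by
    rw [← hgap_succ, ← hgap k,
      eq_sub_of_add_eq' (adapd_smul_mul_Z_succ hη hSsq hZit k).symm]
    module
  calc η • (adapdResidual G η X X0 Y (k+1) - adapdResidual G η X X0 Y k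
        - (G (X (k+1)) - G (X k)))
      = η • (Y (k+1) - Y k) + η • η⁻¹ • ((X0 (k+1) - X0 k) - (X0 k - X0 (k - 1))) := by
        rw [adapdResidual, adapdResidual, Nat.add_sub_cancel]
        module
    _ = _ := by
        rw [hY, smul_inv_smul₀ hη, Matrix.mul_sub W (X0 (k+1) - X0 k)]
        abel

end Adapd

theorem adapd_supporting_inequality_general (N p : ℕ)
    -- mixing matrix assumptions
    (W : Matrix (Fin N) (Fin N) ℝ) (hWsym : Wᵀ = W)
    -- `S` is the unique positive semidefinite square root of `I − W`
    (S : Matrix (Fin N) (Fin N) ℝ) (hSpsd : S.PosSemidef) (hSsq : S * S = 1 - W)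
    -- objective: `F` is `L`-smooth (gradient `G` w.r.t. the Frobenius inner product)
    (L : ℝ) (hL : 0 < L)
    (G : Matrix (Fin N) (Fin p) ℝ → Matrix (Fin N) (Fin p) ℝ)
    (hLip : ∀ U V, frobNorm (G U - G V) ≤ L * frobNorm (U - V))
    -- ADAPD iterates with parameter `η` and error tolerances `ε`
    (η : ℝ) (hη : 0 < η)
    (ε : ℕ → ℝ) (hεmono : ∀ k, ε (k+2) ≤ ε (k+1))
    (X X0 Y Z : ℕ → Matrix (Fin N) (Fin p) ℝ)
    (hres : ∀ k, frobSq (G (X (k+1)) + Y k + η⁻¹ • (X (k+1) - X0 k)) ≤ ε (k+1))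
    (hX0it : ∀ k, X0 (k+1) = (2:ℝ)⁻¹ • (W * X0 k + X (k+1) + η • (Y k - S * Z k)))
    (hYit : ∀ k, Y (k+1) = Y k + η⁻¹ • (X (k+1) - X0 (k+1)))
    (hZit : ∀ k, Z (k+1) = Z k + η⁻¹ • (S * X0 (k+1)))
    -- initialization consistency (with `ε 0 := ε 1`)
    (hε0 : ε 0 = ε 1)
    (hZY0 : S * Z 0 = Y 0)
    (hY0R : ∃ R0 : Matrix (Fin N) (Fin p) ℝ, Y 0 = R0 - G (X 0) ∧ frobSq R0 ≤ ε 0)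
    :
    ∀ k : ℕ,
      (2*η)⁻¹ * (frobSq (S * X0 (k+1)) + frobSq (S * (X0 (k+1) - X0 k))
          - frobSq (S * X0 k))
      + (2*η)⁻¹ * (quadForm W ((X0 (k+1) - X0 k) - (X0 k - X0 (k-1)))
          + quadForm W (X0 (k+1) - X0 k) - quadForm W (X0 k - X0 (k-1)))
        ≤ (L - (2*η)⁻¹) * frobSq (X0 (k+1) - X0 k) + L/2 * frobSq (X (k+1) - X k)
          + (2*η)⁻¹ * frobSq (X0 k - X0 (k-1))
          - (2*η)⁻¹ * frobSq ((X0 (k+1) - X0 k) - (X0 k - X0 (k-1)))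
          + 2/L * ε k := by
  intro k
  have hS : Sᵀ = S := (isHermitian_iff_isSymm.mp hSpsd.isHermitian).eq
  have hεk : ε (k+1) ≤ ε k := by
    cases k with
    | zero => exact hε0.ge
    | succ j => exact hεmono j
  have hR := adapdResidual_le hres hYit hY0R
  rw [adapd_energy_identity hη.ne' hWsym hS hSsq
    (adapd_residual_increment (G := G) hη.ne' hSsq hX0it hYit hZit hZY0 k)]
  have hpair := frobInner_sub_sub_le hL ((hR (k+1)).trans hεk) (hR k)
    (frobSq_le_of_frobNorm_le (hLip (X (k+1)) (X k))) (X0 (k+1) - X0 k)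
  linarith

/-- Lemma: supporting inequality for ADAPD.
`‖·‖_W²` is the (possibly indefinite) quadratic form `quadForm W`, and
`V0^k = (X0^{k+1} − X0^k) − (X0^k − X0^{k-1})` with `X0^{-1} = X0^0`. -/
theorem adapd_supporting_inequality (N p : ℕ) (hN : 0 < N) (hp : 0 < p)
    -- mixing matrix assumptions
    (W : Matrix (Fin N) (Fin N) ℝ) (hWsym : Wᵀ = W)
    (hWub : Matrix.PosSemidef (1 - W)) (hWlb : Matrix.PosDef (1 + W))
    (hWnull : ∀ v : Fin N → ℝ, (1 - W).mulVec v = 0 ↔ ∃ c : ℝ, v = fun _ => c)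
    (ρ : ℝ) (hρdef : ρ = specNorm (W - (N:ℝ)⁻¹ • onesMat N)) (hρlt : ρ < 1)
    -- `S` is the unique positive semidefinite square root of `I − W`
    (S : Matrix (Fin N) (Fin N) ℝ) (hSpsd : S.PosSemidef) (hSsq : S * S = 1 - W)
    -- objective: `F` is `L`-smooth (gradient `G` w.r.t. the Frobenius inner product)
    -- and bounded below by `flb`
    (L flb : ℝ) (hL : 0 < L)
    (F : Matrix (Fin N) (Fin p) ℝ → ℝ)
    (G : Matrix (Fin N) (Fin p) ℝ → Matrix (Fin N) (Fin p) ℝ)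
    (hgrad : ∀ U, HasFDerivAt F (frobCLM (G U)) U)
    (hLip : ∀ U V, frobNorm (G U - G V) ≤ L * frobNorm (U - V))
    (hlb : ∀ U, flb ≤ F U)
    -- ADAPD iterates with parameter `η` and error tolerances `ε`
    (η : ℝ) (hη : 0 < η)
    (ε : ℕ → ℝ) (hεpos : ∀ k, 0 < ε (k+1)) (hεmono : ∀ k, ε (k+2) ≤ ε (k+1))
    (X X0 Y Z : ℕ → Matrix (Fin N) (Fin p) ℝ)
    (hZ0 : ∃ U0 : Matrix (Fin N) (Fin p) ℝ, Z 0 = S * U0)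
    (hres : ∀ k, frobSq (G (X (k+1)) + Y k + η⁻¹ • (X (k+1) - X0 k)) ≤ ε (k+1))
    (hX0it : ∀ k, X0 (k+1) = (2:ℝ)⁻¹ • (W * X0 k + X (k+1) + η • (Y k - S * Z k)))
    (hYit : ∀ k, Y (k+1) = Y k + η⁻¹ • (X (k+1) - X0 (k+1)))
    (hZit : ∀ k, Z (k+1) = Z k + η⁻¹ • (S * X0 (k+1)))
    -- initialization consistency (with `ε 0 := ε 1`)
    (hε0 : ε 0 = ε 1)
    (hZY0 : S * Z 0 = Y 0)
    (hY0R : ∃ R0 : Matrix (Fin N) (Fin p) ℝ, Y 0 = R0 - G (X 0) ∧ frobSq R0 ≤ ε 0)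
    :
    ∀ k : ℕ,
      (2*η)⁻¹ * (frobSq (S * X0 (k+1)) + frobSq (S * (X0 (k+1) - X0 k))
          - frobSq (S * X0 k))
      + (2*η)⁻¹ * (quadForm W ((X0 (k+1) - X0 k) - (X0 k - X0 (k-1)))
          + quadForm W (X0 (k+1) - X0 k) - quadForm W (X0 k - X0 (k-1)))
        ≤ (L - (2*η)⁻¹) * frobSq (X0 (k+1) - X0 k) + L/2 * frobSq (X (k+1) - X k)
          + (2*η)⁻¹ * frobSq (X0 k - X0 (k-1))
          - (2*η)⁻¹ * frobSq ((X0 (k+1) - X0 k) - (X0 k - X0 (k-1)))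
          + 2/L * ε k :=
  adapd_supporting_inequality_general N p W hWsym S hSpsd hSsq L hL G hLip η hη ε hεmono X X0 Y Z
    hres hX0it hYit hZit hε0 hZY0 hY0R

end
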